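/- arXiv:1611.06643 — 2 statements merged into one kernel-verified Lean document; each statement's English description precedes it below -/
import Mathlib

section
/- For every integer k ≥ 1, there exist permutations σ and τ of a set of 12k+6 elements such that: σ is a product of 6k+1 disjoint transpositions (with exactly 4 fixed points), τ is a product of 4k+2 disjoint 3-cycles (with no fixed points), the product σ·τ is a product of one (4k+6)-cycle and 2k disjoint 4-cycles (with no fixed points), the subgroup G generated by σ and τ acts transitively on the 12k+6 points, and moreover this action of G is primitive (it admits no nontrivial block system). -/
/-!
`σ` and `τ` are defined as products of explicit disjoint cycles on `0, …, 12k+5`, and `σ τ` is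
shown to be another such product; this gives the cycle types and fixed points. All three act
on the labels by explicit piecewise-linear formulas, so identifying `σ τ` is a comparison of
formulas.

Primitivity follows from 2-transitivity of `G = ⟨σ, τ⟩`. The elements `σ`, `τ² σ τ` and
`(σ τ)^(4k+6)` (trivial on the long cycle of `σ τ`, the square on each of its 4-cycles) fix `0`,
and together they carry `3` to every nonzero point; since `τ` moves `0`, `G` is 2-transitive,
hence primitive.
-/

open Equiv Equiv.Perm

namespace List

variable {α : Type*} [DecidableEq α] {L : List (List α)} {l : List α} {x : α}

theorem prod_map_formPerm_apply_of_forall_notMem (hx : ∀ l ∈ L, x ∉ l) :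
    (L.map formPerm).prod x = x := by
  induction L with
  | nil => rfl
  | cons l L ih =>
    simp only [map_cons, prod_cons, Perm.mul_apply, forall_mem_cons] at hx ⊢
    rw [ih hx.2, formPerm_apply_of_notMem hx.1]

theorem prod_map_formPerm_apply_of_mem (hL : L.Pairwise List.Disjoint) (hl : l ∈ L)
    (hx : x ∈ l) : (L.map formPerm).prod x = l.formPerm x := by
  induction L with
  | nil => simp at hl
  | cons l' L ih =>
    rw [pairwise_cons] at hL
    simp only [map_cons, prod_cons, Perm.mul_apply]
    rcases mem_cons.1 hl with rfl | hl
    · rw [prod_map_formPerm_apply_of_forall_notMem fun l'' hl'' => hL.1 l'' hl'' hx]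
    · rw [ih hL.2 hl, formPerm_apply_of_notMem fun h =>
        hL.1 l hl h (formPerm_apply_mem_of_mem hx)]

theorem cycleType_prod_map_formPerm [Fintype α] (hnd : ∀ l ∈ L, l.Nodup)
    (hlen : ∀ l ∈ L, 2 ≤ l.length) (hL : L.Pairwise List.Disjoint) :
    (L.map formPerm).prod.cycleType = L.map length := by
  rw [cycleType_eq _ rfl (by simpa using fun l hl => isCycle_formPerm (hnd l hl) (hlen l hl))
    (pairwise_map.2 <| hL.imp_of_mem fun hl hl' h =>
      (formPerm_disjoint_iff (hnd _ hl) (hnd _ hl') (hlen _ hl) (hlen _ hl')).2 h),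
    map_map]
  congr 1
  refine map_congr_left fun l hl => ?_
  simp only [Function.comp_apply]
  rw [support_formPerm_of_nodup _ (hnd l hl) fun y h => by simpa [h] using hlen l hl,
    toFinset_card_of_nodup (hnd l hl)]

theorem map_formPerm (l : List α) (h : l.Nodup) : l.map l.formPerm = l.rotate 1 :=
  ext_getElem (by simp) fun i _ _ => by
    rw [getElem_map, formPerm_apply_getElem _ h, getElem_rotate]

theorem map_map_range_succ_eq_rotate_one {β : Type*} {m : ℕ} {g : ℕ → β} {f : β → β}
    (h : ∀ i < m, f (g i) = g (i + 1)) (hlast : f (g m) = g 0) :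
    ((range (m + 1)).map g).map f = ((range (m + 1)).map g).rotate 1 := by
  refine ext_getElem (by simp) fun i hi _ => ?_
  simp only [length_map, length_range] at hi
  rw [getElem_rotate]
  rcases Nat.lt_succ_iff_lt_or_eq.1 hi with hi | rfl
  · simp [Nat.mod_eq_of_lt (Nat.succ_lt_succ hi), h i hi]
  · simp [hlast]

theorem Nodup.perm_range {l : List ℕ} {n : ℕ} (hnd : l.Nodup) (hlt : ∀ a ∈ l, a < n)
    (hlen : l.length = n) : l.Perm (range n) :=
  (subperm_of_subset hnd fun a ha => mem_range.2 (hlt a ha)).perm_of_length_le (by simp [hlen])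

end List

theorem Equiv.Perm.card_filter_apply_eq_self {α : Type*} [Fintype α] [DecidableEq α]
    (g : Perm α) :
    (Finset.univ.filter fun x => g x = x).card = Fintype.card α - g.cycleType.sum := by
  rw [← g.card_fixedPoints, ← Fintype.card_subtype]
  rfl

theorem Fin.ofNat_inj_of_lt {n : ℕ} [NeZero n] {a b : ℕ} (ha : a < n) (hb : b < n) :
    Fin.ofNat n a = Fin.ofNat n b ↔ a = b := by
  simp [Fin.ext_iff, Nat.mod_eq_of_lt ha, Nat.mod_eq_of_lt hb]

/-- The lists in `C` (the cycles) and the list `F` (the fixed points) together enumerate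
`0, …, n - 1`, each exactly once. -/
def IsCycleCover (n : ℕ) (C : List (List ℕ)) (F : List ℕ) : Prop :=
  (F ++ C.flatten).Perm (List.range n)

def permOfCycles (n : ℕ) [NeZero n] (C : List (List ℕ)) : Perm (Fin n) :=
  ((C.map (List.map (Fin.ofNat n))).map List.formPerm).prod

namespace IsCycleCover

variable {n : ℕ} {C : List (List ℕ)} {F : List ℕ} (hC : IsCycleCover n C F)
include hC

theorem lt_of_mem {l : List ℕ} (hl : l ∈ C) {a : ℕ} (ha : a ∈ l) : a < n :=
  List.mem_range.1 <| hC.subset <| List.mem_append_right _ <| List.mem_flatten_of_mem hl ha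

theorem nodup_flatten : C.flatten.Nodup :=
  (List.nodup_append.1 (hC.nodup_iff.2 List.nodup_range)).2.1

theorem mem_or_exists_of_lt {a : ℕ} (ha : a < n) : a ∈ F ∨ ∃ l ∈ C, a ∈ l := by
  simpa using hC.mem_iff.2 (List.mem_range.2 ha)

theorem notMem_of_mem_fixed {a : ℕ} (haF : a ∈ F) {l : List ℕ} (hl : l ∈ C) : a ∉ l :=
  fun ha => (List.nodup_append.1 (hC.nodup_iff.2 List.nodup_range)).2.2 a haF a
    (List.mem_flatten_of_mem hl ha) rfl

variable [NeZero n]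

theorem nodup_map_ofNat {l : List ℕ} (hl : l ∈ C) : (l.map (Fin.ofNat n)).Nodup :=
  (List.nodup_flatten.1 hC.nodup_flatten).1 l hl |>.map_on fun _ ha _ hb =>
    (Fin.ofNat_inj_of_lt (hC.lt_of_mem hl ha) (hC.lt_of_mem hl hb)).1

theorem pairwise_disjoint_map_ofNat :
    (C.map (List.map (Fin.ofNat n))).Pairwise List.Disjoint := by
  refine List.pairwise_map.2 <| (List.nodup_flatten.1 hC.nodup_flatten).2.imp_of_mem
    fun {l l'} hl hl' h x hx hx' => ?_
  obtain ⟨a, ha, rfl⟩ := List.mem_map.1 hx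
  obtain ⟨b, hb, hab⟩ := List.mem_map.1 hx'
  rw [Fin.ofNat_inj_of_lt (hC.lt_of_mem hl' hb) (hC.lt_of_mem hl ha)] at hab
  exact h ha (hab ▸ hb)

theorem map_permOfCycles {l : List ℕ} (hl : l ∈ C) :
    (l.map (Fin.ofNat n)).map (permOfCycles n C) = (l.map (Fin.ofNat n)).rotate 1 := by
  rw [← (l.map (Fin.ofNat n)).map_formPerm (hC.nodup_map_ofNat hl)]
  exact List.map_congr_left fun x hx => List.prod_map_formPerm_apply_of_mem
    hC.pairwise_disjoint_map_ofNat (List.mem_map_of_mem hl) hx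

theorem map_permOfCycles_pow {l : List ℕ} (hl : l ∈ C) (j : ℕ) :
    (l.map (Fin.ofNat n)).map ⇑(permOfCycles n C ^ j) = (l.rotate j).map (Fin.ofNat n) := by
  induction j with
  | zero => simp
  | succ j ih =>
    rw [pow_succ', Perm.coe_mul, ← List.map_map, ih, List.map_rotate, List.map_rotate,
      hC.map_permOfCycles hl, List.rotate_rotate, List.map_rotate, add_comm]

theorem permOfCycles_pow_apply_of_mem_fixed {a : ℕ} (haF : a ∈ F) (ha : a < n) (j : ℕ) :
    (permOfCycles n C ^ j) (Fin.ofNat n a) = Fin.ofNat n a := by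
  refine Perm.pow_apply_eq_self_of_apply_eq_self
    (List.prod_map_formPerm_apply_of_forall_notMem fun l' hl' hal' => ?_) j
  obtain ⟨l, hl, rfl⟩ := List.mem_map.1 hl'
  obtain ⟨b, hb, hba⟩ := List.mem_map.1 hal'
  rw [Fin.ofNat_inj_of_lt (hC.lt_of_mem hl hb) ha] at hba
  exact hC.notMem_of_mem_fixed haF hl (hba ▸ hb)

theorem val_permOfCycles_pow_apply {j : ℕ} {f : ℕ → ℕ}
    (hcyc : ∀ l ∈ C, l.map f = l.rotate j) (hfix : ∀ a ∈ F, f a = a) (x : Fin n) :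
    ((permOfCycles n C ^ j) x : ℕ) = f x := by
  rcases hC.mem_or_exists_of_lt x.isLt with hxF | ⟨l, hl, hxl⟩
  · have h := hC.permOfCycles_pow_apply_of_mem_fixed hxF x.isLt j
    rw [Fin.ofNat_val_eq_self] at h
    rw [h, hfix x hxF]
  · have h := hC.map_permOfCycles_pow hl j
    rw [← hcyc l hl, List.map_map, List.map_map, List.map_inj_left] at h
    have hfx : f x ∈ l := by
      simpa [hcyc l hl, List.mem_rotate] using List.mem_map_of_mem (f := f) hxl
    have hx := h x hxl
    simp only [Function.comp_apply, Fin.ofNat_val_eq_self] at hx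
    rw [hx, Fin.val_ofNat, Nat.mod_eq_of_lt (hC.lt_of_mem hl hfx)]

theorem val_permOfCycles_apply {f : ℕ → ℕ} (hcyc : ∀ l ∈ C, l.map f = l.rotate 1)
    (hfix : ∀ a ∈ F, f a = a) (x : Fin n) : (permOfCycles n C x : ℕ) = f x := by
  simpa using hC.val_permOfCycles_pow_apply hcyc hfix x

theorem cycleType_permOfCycles (hlen : ∀ l ∈ C, 2 ≤ l.length) :
    (permOfCycles n C).cycleType = C.map List.length := by
  rw [permOfCycles, List.cycleType_prod_map_formPerm
    (by simpa using fun l hl => hC.nodup_map_ofNat hl) (by simpa using hlen)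
    hC.pairwise_disjoint_map_ofNat, List.map_map]
  simp [Function.comp_def]

end IsCycleCover

namespace Subgroup

variable {α : Type*} (G : Subgroup (Perm α))

theorem isBlock_iff_image {B : Set α} :
    MulAction.IsBlock G B ↔ ∀ g ∈ G, ⇑g '' B = B ∨ Disjoint (⇑g '' B) B := by
  simp [MulAction.isBlock_iff_smul_eq_or_disjoint, ← Set.image_smul, Subgroup.smul_def,
    Perm.smul_def]

theorem isMultiplyPretransitive_two_of_stabilizer {a b : α} (hmove : ∃ g ∈ G, g a ≠ a)
    (hstab : ∀ x, x ≠ a → ∃ g ∈ G, g a = a ∧ g b = x) :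
    MulAction.IsMultiplyPretransitive G α 2 := by
  have hfix : ∀ x y, x ≠ a → y ≠ a → ∃ g ∈ G, g a = a ∧ g x = y := by
    intro x y hx hy
    obtain ⟨g, hg, hga, rfl⟩ := hstab x hx
    obtain ⟨h, hh, hha, rfl⟩ := hstab y hy
    exact ⟨h * g⁻¹, mul_mem hh (inv_mem hg),
      by simp [(Equiv.symm_apply_eq g).2 hga.symm, hha]⟩
  have hto : ∀ x, ∃ g ∈ G, g x = a := by
    intro x
    obtain ⟨g₀, hg₀, hg₀a⟩ := hmove
    by_cases hx : x = a
    · exact ⟨1, one_mem G, hx⟩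
    obtain ⟨h, hh, -, hhx⟩ := hfix x (g₀ a) hx hg₀a
    exact ⟨g₀⁻¹ * h, mul_mem (inv_mem hg₀) hh, by simp [hhx]⟩
  rw [MulAction.is_two_pretransitive_iff]
  intro x y c d hxy hcd
  obtain ⟨g, hg, hgx⟩ := hto x
  obtain ⟨g', hg', hg'c⟩ := hto c
  obtain ⟨h, hh, hha, hhy⟩ := hfix (g y) (g' d) (hgx ▸ g.injective.ne hxy.symm)
    (hg'c ▸ g'.injective.ne hcd.symm)
  refine ⟨⟨g'⁻¹ * h * g, mul_mem (mul_mem (inv_mem hg') hh) hg⟩, ?_, ?_⟩ <;>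
    simp [Subgroup.smul_def, Perm.smul_def, hgx, hha, hhy, (Equiv.symm_apply_eq g').2 hg'c.symm]

end Subgroup

namespace LameDessin

variable (k : ℕ)

def sigmaCycles : List (List ℕ) :=
  (List.range (4 * k + 1)).map (fun i => [3 * i + 2, 3 * i + 3]) ++
    (List.range (2 * k)).map fun i => [3 * i + 4, 12 * k + 4 - 3 * i]

def tauCycles : List (List ℕ) :=
  (List.range (4 * k + 2)).map fun i => [3 * i, 3 * i + 1, 3 * i + 2]

/-- The `i`-th point of the long cycle `0, 1, 3, 12k+4, 12k+5, 12k+2, 12k-1, …, 5, 2`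
of `σ τ`. -/
def longCycleAt (i : ℕ) : ℕ :=
  if i = 0 then 0 else if i = 1 then 1 else if i = 2 then 3 else if i = 3 then 12 * k + 4
  else if i = 4 then 12 * k + 5 else 12 * k + 17 - 3 * i

def longCycle : List ℕ := (List.range (4 * k + 6)).map (longCycleAt k)

def fourCycles : List (List ℕ) :=
  (List.range (2 * k)).map fun i => [3 * i + 4, 3 * i + 6, 12 * k + 1 - 3 * i, 12 * k + 3 - 3 * i]

def sigmaTauCycles : List (List ℕ) := longCycle k :: fourCycles k

abbrev sigma : Perm (Fin (12 * k + 6)) := permOfCycles _ (sigmaCycles k)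

abbrev tau : Perm (Fin (12 * k + 6)) := permOfCycles _ (tauCycles k)

abbrev sigmaTau : Perm (Fin (12 * k + 6)) := permOfCycles _ (sigmaTauCycles k)

abbrev monodromy : Subgroup (Perm (Fin (12 * k + 6))) := Subgroup.closure {sigma k, tau k}

def sigmaNat (a : ℕ) : ℕ :=
  if a % 3 = 2 ∧ a ≤ 12 * k + 2 then a + 1
  else if a % 3 = 0 ∧ 3 ≤ a ∧ a ≤ 12 * k + 3 then a - 1
  else if a % 3 = 1 ∧ 4 ≤ a ∧ a ≤ 12 * k + 4 ∧ a ≠ 6 * k + 4 then 12 * k + 8 - a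
  else a

def tauNat (a : ℕ) : ℕ := if a % 3 = 2 then a - 2 else a + 1

def sigmaTauPowNat (a : ℕ) : ℕ :=
  if a % 3 = 1 ∧ 4 ≤ a ∧ a ≤ 12 * k + 1 then 12 * k + 5 - a
  else if a % 3 = 0 ∧ 6 ≤ a ∧ a ≤ 12 * k + 3 then 12 * k + 9 - a
  else a

section Evaluation

variable {k} {a : ℕ}

theorem tauNat_of_mod_ne_two (h : a % 3 ≠ 2) : tauNat a = a + 1 := if_neg h

theorem tauNat_of_mod_eq_two (h : a % 3 = 2) : tauNat a = a - 2 := if_pos h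

theorem sigmaNat_of_mod_eq_two (h : a % 3 = 2) (h' : a ≤ 12 * k + 2) : sigmaNat k a = a + 1 :=
  if_pos ⟨h, h'⟩

theorem sigmaNat_of_mod_eq_zero (h : a % 3 = 0) (h₁ : 3 ≤ a) (h₂ : a ≤ 12 * k + 3) :
    sigmaNat k a = a - 1 := by
  rw [sigmaNat, if_neg (by omega), if_pos ⟨h, h₁, h₂⟩]

theorem sigmaNat_of_mod_eq_one (h : a % 3 = 1) (h₁ : 4 ≤ a) (h₂ : a ≤ 12 * k + 4)
    (h₃ : a ≠ 6 * k + 4) : sigmaNat k a = 12 * k + 8 - a := by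
  rw [sigmaNat, if_neg (by omega), if_neg (by omega), if_pos ⟨h, h₁, h₂, h₃⟩]

theorem sigmaNat_of_eq_six_mul_add_four (h : a = 6 * k + 4) : sigmaNat k a = a := by
  rw [sigmaNat, if_neg (by omega), if_neg (by omega), if_neg (by omega)]

theorem sigmaTauPowNat_of_mod_eq_one (h : a % 3 = 1) (h₁ : 4 ≤ a) (h₂ : a ≤ 12 * k + 1) :
    sigmaTauPowNat k a = 12 * k + 5 - a :=
  if_pos ⟨h, h₁, h₂⟩

theorem sigmaTauPowNat_of_mod_eq_zero (h : a % 3 = 0) (h₁ : 6 ≤ a) (h₂ : a ≤ 12 * k + 3) :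
    sigmaTauPowNat k a = 12 * k + 9 - a := by
  rw [sigmaTauPowNat, if_neg (by omega), if_pos ⟨h, h₁, h₂⟩]

end Evaluation

theorem isCycleCover_sigmaCycles :
    IsCycleCover (12 * k + 6) (sigmaCycles k) [0, 1, 6 * k + 4, 12 * k + 5] := by
  refine List.Nodup.perm_range ?_ ?_ ?_ <;>
    simp [sigmaCycles, List.nodup_append, List.nodup_flatten, List.pairwise_iff_getElem,
      List.disjoint_left, or_imp, forall_and, forall_exists_index, Function.comp_def] <;>
    repeat' (first | intro _ | apply And.intro)
  all_goals omega

theorem isCycleCover_tauCycles : IsCycleCover (12 * k + 6) (tauCycles k) [] := by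
  refine List.Nodup.perm_range ?_ ?_ ?_ <;>
    simp [tauCycles, List.nodup_flatten, List.pairwise_iff_getElem, List.disjoint_left, or_imp,
      forall_and, forall_exists_index, Function.comp_def] <;>
    repeat' (first | intro _ | apply And.intro)
  all_goals omega

theorem longCycleAt_of_five_le {i : ℕ} (hi : 5 ≤ i) :
    longCycleAt k i = 12 * k + 17 - 3 * i := by
  simp only [longCycleAt]
  split_ifs <;> omega

theorem nodup_longCycle : (longCycle k).Nodup := by
  refine List.Nodup.map_on (fun i hi j hj h => ?_) List.nodup_range
  simp only [List.mem_range] at hi hj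
  unfold longCycleAt at h
  split_ifs at h <;> omega

theorem lt_of_mem_longCycle {a : ℕ} (ha : a ∈ longCycle k) : a < 12 * k + 6 := by
  obtain ⟨i, hi, rfl⟩ := List.mem_map.1 ha
  simp only [List.mem_range] at hi
  unfold longCycleAt
  split_ifs <;> omega

theorem mod_three_of_mem_longCycle {a : ℕ} (ha : a ∈ longCycle k) :
    a % 3 = 2 ∨ a < 4 ∨ 12 * k + 4 ≤ a := by
  obtain ⟨i, -, rfl⟩ := List.mem_map.1 ha
  unfold longCycleAt
  split_ifs <;> omega

theorem isCycleCover_sigmaTauCycles : IsCycleCover (12 * k + 6) (sigmaTauCycles k) [] := by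
  refine List.Nodup.perm_range ?_ ?_ ?_
  · simp only [sigmaTauCycles, List.nil_append, List.flatten_cons, List.nodup_append,
      nodup_longCycle, true_and]
    refine ⟨?_, fun a ha b hb => ?_⟩
    · simp [fourCycles, List.nodup_flatten, List.pairwise_iff_getElem, List.disjoint_left]
      repeat' (first | intro _ | apply And.intro)
      all_goals omega
    · have := mod_three_of_mem_longCycle k ha
      simp [fourCycles] at hb
      omega
  · simp only [sigmaTauCycles, List.nil_append, List.flatten_cons, List.mem_append]
    rintro a (ha | ha)
    · exact lt_of_mem_longCycle k ha
    · simp [fourCycles] at ha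
      omega
  · simp [sigmaTauCycles, longCycle, fourCycles, Function.comp_def]
    ring

theorem val_sigma_apply (x : Fin (12 * k + 6)) : (sigma k x : ℕ) = sigmaNat k x := by
  refine (isCycleCover_sigmaCycles k).val_permOfCycles_apply ?_ ?_ x
  · simp only [sigmaCycles, List.mem_append, List.mem_map, List.mem_range]
    rintro l (⟨i, hi, rfl⟩ | ⟨i, hi, rfl⟩) <;> simp <;> constructor <;> unfold sigmaNat <;>
      split_ifs <;> omega
  · simp only [List.mem_cons, List.not_mem_nil, or_false, forall_eq_or_imp, forall_eq]
    refine ⟨by simp [sigmaNat], by simp [sigmaNat], ?_, ?_⟩ <;> unfold sigmaNat <;>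
      split_ifs <;> omega

theorem val_tau_apply (x : Fin (12 * k + 6)) : (tau k x : ℕ) = tauNat x := by
  refine (isCycleCover_tauCycles k).val_permOfCycles_apply ?_ (by simp) x
  simp only [tauCycles, List.mem_map, List.mem_range]
  rintro l ⟨i, hi, rfl⟩
  simp only [List.map_cons, List.map_nil, List.rotate_cons_succ, List.rotate_zero,
    List.cons_append, List.nil_append, List.cons.injEq, and_true, tauNat]
  split_ifs <;> omega

theorem sigmaNat_tauNat_longCycleAt {i : ℕ} (hi : i < 4 * k + 5) :
    sigmaNat k (tauNat (longCycleAt k i)) = longCycleAt k (i + 1) := by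
  obtain rfl | rfl | rfl | rfl | rfl | hi5 :
      i = 0 ∨ i = 1 ∨ i = 2 ∨ i = 3 ∨ i = 4 ∨ 5 ≤ i := by
    omega
  · simp [longCycleAt, sigmaNat, tauNat]
  · simp [longCycleAt, sigmaNat, tauNat]
  · simp [longCycleAt, sigmaNat, tauNat]
  · simp [longCycleAt, sigmaNat, tauNat]
    split_ifs <;> omega
  · rw [longCycleAt_of_five_le k le_rfl]
    simp [longCycleAt, sigmaNat, tauNat]
    split_ifs <;> omega
  · rw [longCycleAt_of_five_le k hi5, longCycleAt_of_five_le k (by omega)]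
    unfold sigmaNat tauNat
    split_ifs <;> omega

theorem val_sigmaTau_apply (x : Fin (12 * k + 6)) :
    (sigmaTau k x : ℕ) = sigmaNat k (tauNat x) := by
  refine (isCycleCover_sigmaTauCycles k).val_permOfCycles_apply (f := sigmaNat k ∘ tauNat) ?_
    (by simp) x
  simp only [sigmaTauCycles, List.mem_cons, fourCycles, List.mem_map, List.mem_range]
  rintro l (rfl | ⟨i, hi, rfl⟩)
  · refine List.map_map_range_succ_eq_rotate_one
      (fun i hi => sigmaNat_tauNat_longCycleAt k hi) ?_
    rw [Function.comp_apply, longCycleAt_of_five_le k (by omega),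
      show 12 * k + 17 - 3 * (4 * k + 5) = 2 by omega]
    simp [longCycleAt, sigmaNat, tauNat]
  · simp only [List.map_cons, List.map_nil, List.rotate_cons_succ, List.rotate_zero,
      List.cons_append, List.nil_append, List.cons.injEq, and_true, Function.comp_apply]
    refine ⟨?_, ?_, ?_, ?_⟩ <;> unfold sigmaNat tauNat <;> split_ifs <;> omega

theorem sigma_mul_tau : sigma k * tau k = sigmaTau k :=
  Perm.ext fun x => Fin.ext <| by
    rw [Perm.mul_apply, val_sigma_apply, val_tau_apply, val_sigmaTau_apply k]

theorem val_sigma_mul_tau_pow_apply (x : Fin (12 * k + 6)) :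
    (((sigma k * tau k) ^ (4 * k + 6)) x : ℕ) = sigmaTauPowNat k x := by
  rw [sigma_mul_tau k]
  refine (isCycleCover_sigmaTauCycles k).val_permOfCycles_pow_apply ?_ (by simp) x
  simp only [sigmaTauCycles, List.mem_cons, fourCycles, List.mem_map, List.mem_range]
  rintro l (rfl | ⟨i, hi, rfl⟩)
  · rw [show 4 * k + 6 = (longCycle k).length by simp [longCycle], List.rotate_length]
    refine (List.map_congr_left fun a ha => (?_ : sigmaTauPowNat k a = a)).trans (List.map_id _)
    have := mod_three_of_mem_longCycle k ha
    unfold sigmaTauPowNat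
    split_ifs <;> omega
  · rw [← List.rotate_mod, show (4 * k + 6) % List.length [_, _, _, _] = 2 by simp]
    simp only [List.map_cons, List.map_nil, List.rotate_cons_succ, List.rotate_zero,
      List.cons_append, List.nil_append, List.cons.injEq, and_true]
    refine ⟨?_, ?_, ?_, ?_⟩ <;> unfold sigmaTauPowNat <;> split_ifs <;> omega

theorem cycleType_sigma : (sigma k).cycleType = Multiset.replicate (6 * k + 1) 2 := by
  rw [(isCycleCover_sigmaCycles k).cycleType_permOfCycles, ← Multiset.coe_replicate]
  · simp [sigmaCycles, Function.comp_def]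
    omega
  · simp only [sigmaCycles, List.mem_append, List.mem_map]
    rintro l (⟨i, -, rfl⟩ | ⟨i, -, rfl⟩) <;> simp

theorem cycleType_tau : (tau k).cycleType = Multiset.replicate (4 * k + 2) 3 := by
  rw [(isCycleCover_tauCycles k).cycleType_permOfCycles, ← Multiset.coe_replicate]
  · simp [tauCycles, Function.comp_def]
  · simp only [tauCycles, List.mem_map]
    rintro l ⟨i, -, rfl⟩
    simp

theorem cycleType_sigma_mul_tau :
    (sigma k * tau k).cycleType = (4 * k + 6) ::ₘ Multiset.replicate (2 * k) 4 := by
  rw [sigma_mul_tau k, (isCycleCover_sigmaTauCycles k).cycleType_permOfCycles,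
    ← Multiset.coe_replicate, Multiset.cons_coe]
  · simp [sigmaTauCycles, longCycle, fourCycles, Function.comp_def]
  · simp only [sigmaTauCycles, List.mem_cons, fourCycles, List.mem_map]
    rintro l (rfl | ⟨i, -, rfl⟩) <;> simp [longCycle]

def ReachableFixingZero {n : ℕ} [NeZero n] (G : Subgroup (Perm (Fin n))) (a : ℕ) : Prop :=
  ∃ g ∈ G, g 0 = 0 ∧ (g 3 : ℕ) = a

theorem ReachableFixingZero.map {n : ℕ} [NeZero n] {G : Subgroup (Perm (Fin n))} {a b : ℕ}
    (ha : ReachableFixingZero G a) {g : Perm (Fin n)} {f : ℕ → ℕ} (hg : g ∈ G)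
    (hg0 : g 0 = 0) (hgf : ∀ x, (g x : ℕ) = f x) (hb : f a = b) : ReachableFixingZero G b := by
  obtain ⟨h, hh, hh0, rfl⟩ := ha
  exact ⟨g * h, mul_mem hg hh, by rw [Perm.mul_apply, hh0, hg0],
    by rw [Perm.mul_apply, hgf, hb]⟩

section Reachability

variable {k} {a b : ℕ} (ha : ReachableFixingZero (monodromy k) a)
include ha

theorem ReachableFixingZero.apply_sigma (hb : sigmaNat k a = b) :
    ReachableFixingZero (monodromy k) b :=
  ha.map (Subgroup.subset_closure (by simp)) (Fin.ext <| by simp [val_sigma_apply, sigmaNat])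
    (val_sigma_apply k) hb

theorem ReachableFixingZero.apply_conj (hb : tauNat (tauNat (sigmaNat k (tauNat a))) = b) :
    ReachableFixingZero (monodromy k) b := by
  have hτ : tau k ∈ monodromy k := Subgroup.subset_closure (by simp)
  have hσ : sigma k ∈ monodromy k := Subgroup.subset_closure (by simp)
  have hf : ∀ x, ((tau k * tau k * sigma k * tau k) x : ℕ) =
      tauNat (tauNat (sigmaNat k (tauNat x))) := fun x => by
    simp only [Perm.mul_apply, val_sigma_apply, val_tau_apply]
  exact ha.map (f := fun a => tauNat (tauNat (sigmaNat k (tauNat a))))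
    (mul_mem (mul_mem (mul_mem hτ hτ) hσ) hτ)
    (Fin.ext <| by rw [hf]; simp [sigmaNat, tauNat]) hf hb

theorem ReachableFixingZero.apply_sigmaTauPow (hb : sigmaTauPowNat k a = b) :
    ReachableFixingZero (monodromy k) b :=
  ha.map (pow_mem (mul_mem (Subgroup.subset_closure (by simp))
      (Subgroup.subset_closure (by simp))) _)
    (Fin.ext <| by simp [val_sigma_mul_tau_pow_apply k, sigmaTauPowNat])
    (val_sigma_mul_tau_pow_apply k) hb

end Reachability

theorem reachableFixingZero_three_mul {j : ℕ} (hj₁ : 1 ≤ j) (hj : j ≤ 4 * k + 1) :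
    ReachableFixingZero (monodromy k) (3 * j) := by
  induction j, hj₁ using Nat.le_induction with
  | base => exact ⟨1, one_mem _, rfl, by simp⟩
  | succ j hj₁ ih =>
    -- `τ² σ τ` sends `3 j` to `12k + 6 - 3 j`, and `(σ τ)^(4k+6)` sends that to `3 j + 3`
    refine ((ih (by omega)).apply_conj rfl).apply_sigmaTauPow ?_
    rcases eq_or_ne j (2 * k + 1) with rfl | hj₀
    · simp (disch := omega) only [tauNat_of_mod_ne_two, tauNat_of_mod_eq_two,
        sigmaNat_of_eq_six_mul_add_four, sigmaTauPowNat_of_mod_eq_zero]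
      omega
    · simp (disch := omega) only [tauNat_of_mod_ne_two, tauNat_of_mod_eq_two,
        sigmaNat_of_mod_eq_one, sigmaTauPowNat_of_mod_eq_zero]
      omega

theorem reachableFixingZero_of_ne_zero (hk : 1 ≤ k) {a : ℕ} (ha0 : a ≠ 0)
    (ha : a < 12 * k + 6) : ReachableFixingZero (monodromy k) a := by
  have hmod2 : ∀ j ≤ 4 * k, ReachableFixingZero (monodromy k) (3 * j + 2) := fun j hj =>
    (reachableFixingZero_three_mul k (j := j + 1) (by omega) (by omega)).apply_sigma <| by
      simp (disch := omega) only [sigmaNat_of_mod_eq_zero]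
      omega
  have hmod1 : ∀ j < 4 * k, ReachableFixingZero (monodromy k) (3 * j + 1) := fun j hj =>
    (hmod2 (j + 1) (by omega)).apply_conj <| by
      simp (disch := omega) only [tauNat_of_mod_ne_two, tauNat_of_mod_eq_two,
        sigmaNat_of_mod_eq_zero]
      omega
  have h121 : ReachableFixingZero (monodromy k) (3 * (4 * k) + 1) :=
    (hmod1 1 (by omega)).apply_sigmaTauPow <| by
      simp (disch := omega) only [sigmaTauPowNat_of_mod_eq_one]
      omega
  obtain ⟨q, rfl | rfl | rfl⟩ : ∃ q, a = 3 * q ∨ a = 3 * q + 1 ∨ a = 3 * q + 2 :=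
    ⟨a / 3, by omega⟩
  · exact reachableFixingZero_three_mul k (by omega) (by omega)
  · obtain hq | rfl | rfl : q < 4 * k ∨ q = 4 * k ∨ q = 4 * k + 1 := by omega
    · exact hmod1 q hq
    · exact h121
    · exact (hmod1 1 (by omega)).apply_sigma <| by
        simp (disch := omega) only [sigmaNat_of_mod_eq_one]
        omega
  · obtain hq | rfl : q ≤ 4 * k ∨ q = 4 * k + 1 := by omega
    · exact hmod2 q hq
    · exact h121.apply_conj <| by
        simp (disch := omega) only [tauNat_of_mod_ne_two, sigmaNat_of_mod_eq_two]
        omega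

theorem isMultiplyPretransitive_monodromy (hk : 1 ≤ k) :
    MulAction.IsMultiplyPretransitive (monodromy k) (Fin (12 * k + 6)) 2 := by
  refine Subgroup.isMultiplyPretransitive_two_of_stabilizer _ (a := 0) (b := 3)
    ⟨tau k, Subgroup.subset_closure (by simp), fun h => ?_⟩ fun x hx => ?_
  · simpa [val_tau_apply, tauNat] using congrArg Fin.val h
  · obtain ⟨g, hg, hg0, hg3⟩ :=
      reachableFixingZero_of_ne_zero k hk (a := x) (fun h => hx (Fin.ext h)) x.isLt
    exact ⟨g, hg, hg0, Fin.ext hg3⟩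

end LameDessin

/-- For every integer `k ≥ 1` there exist permutations `σ, τ` of `12k+6` points such that
`σ` is a product of `6k+1` disjoint transpositions (with exactly `4` fixed points), `τ` is a
product of `4k+2` disjoint 3-cycles (with no fixed points), `σ·τ` is a product of one
`(4k+6)`-cycle and `2k` disjoint 4-cycles (with no fixed points), the subgroup `G = ⟨σ, τ⟩`
acts transitively, and moreover the action of `G` is primitive: every block (a set mapped by
each element of `G` either to itself or to a disjoint set) is a subsingleton or everything. -/
theorem stmt_13 (k : ℕ) (hk : 1 ≤ k) :
    ∃ σ τ : Equiv.Perm (Fin (12 * k + 6)),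
      σ.cycleType = Multiset.replicate (6 * k + 1) 2 ∧
      (Finset.univ.filter fun x => σ x = x).card = 4 ∧
      τ.cycleType = Multiset.replicate (4 * k + 2) 3 ∧
      (Finset.univ.filter fun x => τ x = x).card = 0 ∧
      (σ * τ).cycleType = (4 * k + 6) ::ₘ Multiset.replicate (2 * k) 4 ∧
      (Finset.univ.filter fun x => (σ * τ) x = x).card = 0 ∧
      (∀ x y : Fin (12 * k + 6),
        ∃ g ∈ Subgroup.closure ({σ, τ} : Set (Equiv.Perm (Fin (12 * k + 6)))), g x = y) ∧
      (∀ B : Set (Fin (12 * k + 6)),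
        (∀ g ∈ Subgroup.closure ({σ, τ} : Set (Equiv.Perm (Fin (12 * k + 6)))),
          ⇑g '' B = B ∨ Disjoint (⇑g '' B) B) →
        B.Subsingleton ∨ B = Set.univ) := by
  have h2 := LameDessin.isMultiplyPretransitive_monodromy k hk
  refine ⟨LameDessin.sigma k, LameDessin.tau k, LameDessin.cycleType_sigma k, ?_,
    LameDessin.cycleType_tau k, ?_, LameDessin.cycleType_sigma_mul_tau k, ?_,
    fun x y => ?_, fun B hB => ?_⟩
  · rw [card_filter_apply_eq_self, LameDessin.cycleType_sigma]
    simp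
    omega
  · rw [card_filter_apply_eq_self, LameDessin.cycleType_tau]
    simp
    omega
  · rw [card_filter_apply_eq_self, LameDessin.cycleType_sigma_mul_tau k]
    simp
    omega
  · obtain ⟨g, hg⟩ :=
      (MulAction.isPretransitive_of_is_two_pretransitive (h2 := h2)).exists_smul_eq x y
    exact ⟨g, g.2, hg⟩
  · exact (MulAction.isPreprimitive_of_is_two_pretransitive h2).isTrivialBlock_of_isBlock
      ((Subgroup.isBlock_iff_image _).2 hB)
end

section
/- There exist permutations σ and τ of a set of 30 elements such that: σ is a product of 14 disjoint transpositions (with exactly 2 fixed points), τ is a product of one 9-cycle and seven disjoint 3-cycles (with no fixed points), the product σ·τ is a product of one 2-cycle and seven disjoint 4-cycles (with no fixed points), the subgroup G generated by σ and τ acts transitively on the 30 points, but this action of G is imprimitive: it admits a nontrivial block system consisting of three blocks of size 10. -/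
/-!
The permutations are written down as products of disjoint cycles, which gives their cycle
types, and `σ₀ * τ₀` is checked pointwise to be the product of the listed cycles. Transitivity
follows from a breadth-first search from `0`, which reaches every point after eleven rounds of
applying `σ₀` and `τ₀`. The three blocks are the fibres of `x ↦ x / 10`: `σ₀` swaps the first
two and fixes the third, `τ₀` permutes them cyclically, so every element of `⟨σ₀, τ₀⟩` permutes
the fibres of this map.
-/

namespace Equiv.Perm

variable {α β : Type*}

theorem cycleType_prod_map_formPerm [DecidableEq α] [Fintype α] {L : List (List α)}
    (hnodup : L.flatten.Nodup) (hlen : ∀ l ∈ L, 2 ≤ l.length) :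
    (L.map List.formPerm).prod.cycleType = L.map List.length := by
  obtain ⟨hnodup, hdisj⟩ := List.nodup_flatten.1 hnodup
  rw [cycleType_eq _ rfl]
  · rw [List.map_map]
    congr 1
    refine List.map_congr_left fun l hl => ?_
    have hsingle : ∀ x, l ≠ [x] := by rintro x rfl; simpa using hlen _ hl
    simp [List.support_formPerm_of_nodup l (hnodup l hl) hsingle,
      List.toFinset_card_of_nodup (hnodup l hl)]
  · simpa using fun l hl => List.isCycle_formPerm (hnodup l hl) (hlen l hl)
  · rw [List.pairwise_map]
    refine hdisj.imp_of_mem fun {l l'} hl hl' h => ?_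
    exact (List.formPerm_disjoint_iff (hnodup l hl) (hnodup l' hl') (hlen l hl) (hlen l' hl')).2 h

theorem card_filter_apply_eq_self_s17 [DecidableEq α] [Fintype α] (σ : Perm α) :
    (Finset.univ.filter fun x => σ x = x).card = Fintype.card α - σ.cycleType.sum := by
  rw [← card_fixedPoints, ← Fintype.card_subtype]
  rfl

def orbitStep [DecidableEq α] (gens : List (Perm α)) (A : Finset α) : Finset α :=
  A ∪ A.biUnion fun x => (gens.map fun g => g x).toFinset

theorem exists_mem_apply_eq_of_mem_iterate_orbitStep [DecidableEq α] {H : Subgroup (Perm α)}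
    {gens : List (Perm α)} (hgens : ∀ g ∈ gens, g ∈ H) (a : α) :
    ∀ n, ∀ y ∈ (orbitStep gens)^[n] {a}, ∃ h ∈ H, h a = y
  | 0, y, hy => ⟨1, H.one_mem, (Finset.mem_singleton.1 hy).symm⟩
  | n + 1, y, hy => by
    rw [Function.iterate_succ_apply', orbitStep, Finset.mem_union, Finset.mem_biUnion] at hy
    rcases hy with hy | ⟨x, hx, hxy⟩
    · exact exists_mem_apply_eq_of_mem_iterate_orbitStep hgens a n y hy
    · obtain ⟨g, hg, rfl⟩ := List.mem_map.1 (List.mem_toFinset.1 hxy)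
      obtain ⟨h, hh, rfl⟩ := exists_mem_apply_eq_of_mem_iterate_orbitStep hgens a n x hx
      exact ⟨g * h, H.mul_mem (hgens g hg) hh, rfl⟩

theorem exists_mem_apply_eq_of_forall_base {H : Subgroup (Perm α)} {a : α}
    (h : ∀ y, ∃ g ∈ H, g a = y) (x y : α) : ∃ g ∈ H, g x = y := by
  obtain ⟨gx, hgx, rfl⟩ := h x
  obtain ⟨gy, hgy, rfl⟩ := h y
  exact ⟨gy * gx⁻¹, H.mul_mem hgy (H.inv_mem hgx), by simp⟩

def fiberPermuting (f : α → β) : Subgroup (Perm α) where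
  carrier := {g | ∃ π : Perm β, ∀ x, f (g x) = π (f x)}
  one_mem' := ⟨1, fun _ => rfl⟩
  mul_mem' := by
    rintro g h ⟨π, hπ⟩ ⟨ρ, hρ⟩
    exact ⟨π * ρ, fun x => by simp [hπ, hρ]⟩
  inv_mem' := by
    rintro g ⟨π, hπ⟩
    exact ⟨π⁻¹, fun x => by rw [eq_inv_iff_eq, ← hπ]; simp⟩

theorem image_preimage_singleton {f : α → β} {g : Perm α} {π : Perm β}
    (hπ : ∀ x, f (g x) = π (f x)) (b : β) : g '' (f ⁻¹' {b}) = f ⁻¹' {π b} := by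
  ext y
  rw [Equiv.image_eq_preimage_symm]
  simp only [Set.mem_preimage, Set.mem_singleton_iff]
  rw [← g.apply_symm_apply y, hπ, g.apply_symm_apply, π.injective.eq_iff]

theorem image_preimage_singleton_eq_or_disjoint {f : α → β} {g : Perm α}
    (hg : g ∈ fiberPermuting f) (b : β) :
    g '' (f ⁻¹' {b}) = f ⁻¹' {b} ∨ _root_.Disjoint (g '' (f ⁻¹' {b})) (f ⁻¹' {b}) := by
  obtain ⟨π, hπ⟩ := hg
  rw [image_preimage_singleton hπ]
  obtain h | h := eq_or_ne (π b) b
  · exact .inl (by rw [h])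
  · exact .inr ((Set.disjoint_singleton.2 h).preimage f)

end Equiv.Perm

def sigmaCycles : List (List (Fin 30)) :=
  [[0, 10], [1, 11], [2, 12], [3, 13], [4, 14], [5, 15], [6, 16], [7, 17], [8, 18], [9, 19],
    [20, 21], [22, 23], [24, 25], [26, 27]]

def tauCycles : List (List (Fin 30)) :=
  [[3, 17, 25, 4, 12, 29, 8, 16, 26], [0, 14, 28], [1, 15, 20], [2, 19, 23], [5, 11, 27],
    [6, 13, 21], [7, 18, 22], [9, 10, 24]]

def sigmaTauCycles : List (List (Fin 30)) :=
  [[1, 5], [0, 4, 2, 9], [3, 7, 8, 6], [10, 25, 14, 28], [11, 26, 13, 20], [12, 29, 18, 23],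
    [15, 21, 16, 27], [17, 24, 19, 22]]

def σ₀ : Equiv.Perm (Fin 30) := (sigmaCycles.map List.formPerm).prod

def τ₀ : Equiv.Perm (Fin 30) := (tauCycles.map List.formPerm).prod

theorem cycleType_σ₀ : σ₀.cycleType = Multiset.replicate 14 2 :=
  (Equiv.Perm.cycleType_prod_map_formPerm (L := sigmaCycles) (by decide) (by decide)).trans
    (by decide)

theorem cycleType_τ₀ : τ₀.cycleType = 9 ::ₘ Multiset.replicate 7 3 :=
  (Equiv.Perm.cycleType_prod_map_formPerm (L := tauCycles) (by decide) (by decide)).trans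
    (by decide)

set_option maxRecDepth 100000 in
theorem σ₀_mul_τ₀ : σ₀ * τ₀ = (sigmaTauCycles.map List.formPerm).prod := Equiv.ext (by decide)

theorem cycleType_σ₀_mul_τ₀ : (σ₀ * τ₀).cycleType = 2 ::ₘ Multiset.replicate 7 4 := by
  rw [σ₀_mul_τ₀]
  exact (Equiv.Perm.cycleType_prod_map_formPerm (L := sigmaTauCycles) (by decide) (by decide)).trans
    (by decide)

set_option maxRecDepth 100000 in
theorem orbit_σ₀_τ₀ : (Equiv.Perm.orbitStep [σ₀, τ₀])^[11] {0} = Finset.univ := by decide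

def blockOf (x : Fin 30) : Fin 3 := ⟨x / 10, by omega⟩

set_option maxRecDepth 100000 in
theorem σ₀_mem : σ₀ ∈ Equiv.Perm.fiberPermuting blockOf := ⟨Equiv.swap 0 1, by decide⟩

set_option maxRecDepth 100000 in
theorem τ₀_mem : τ₀ ∈ Equiv.Perm.fiberPermuting blockOf := ⟨finRotate 3, by decide⟩

theorem ncard_blockOf_fiber (i : Fin 3) : (blockOf ⁻¹' {i}).ncard = 10 := by
  rw [show blockOf ⁻¹' {i} = (Finset.univ.filter (blockOf · = i) : Set (Fin 30)) by ext; simp,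
    Set.ncard_coe_finset]
  revert i
  decide

/-- There exist permutations `σ, τ` of `30` points such that `σ` is a product of `14`
disjoint transpositions (with exactly `2` fixed points), `τ` is a product of one 9-cycle and
seven disjoint 3-cycles (with no fixed points), `σ·τ` is a product of one 2-cycle and seven
disjoint 4-cycles (with no fixed points), the subgroup `G = ⟨σ, τ⟩` acts transitively, but
the action is imprimitive: it admits a nontrivial block system consisting of three blocks of
size `10` (each mapped by every element of `G` either to itself or to a disjoint set). -/
theorem stmt_17 :
    ∃ σ τ : Equiv.Perm (Fin 30),
      σ.cycleType = Multiset.replicate 14 2 ∧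
      (Finset.univ.filter fun x => σ x = x).card = 2 ∧
      τ.cycleType = 9 ::ₘ Multiset.replicate 7 3 ∧
      (Finset.univ.filter fun x => τ x = x).card = 0 ∧
      (σ * τ).cycleType = 2 ::ₘ Multiset.replicate 7 4 ∧
      (Finset.univ.filter fun x => (σ * τ) x = x).card = 0 ∧
      (∀ x y : Fin 30,
        ∃ g ∈ Subgroup.closure ({σ, τ} : Set (Equiv.Perm (Fin 30))), g x = y) ∧
      ∃ B : Fin 3 → Set (Fin 30),
        (∀ i, (B i).ncard = 10) ∧
        (∀ i j, i ≠ j → Disjoint (B i) (B j)) ∧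
        (⋃ i, B i) = Set.univ ∧
        (∀ i, ∀ g ∈ Subgroup.closure ({σ, τ} : Set (Equiv.Perm (Fin 30))),
          ⇑g '' B i = B i ∨ Disjoint (⇑g '' B i) (B i)) := by
  have hgens : ∀ g ∈ [σ₀, τ₀], g ∈ Subgroup.closure ({σ₀, τ₀} : Set (Equiv.Perm (Fin 30))) :=
    fun g hg => Subgroup.subset_closure (by simpa using hg)
  have hblocks : Subgroup.closure ({σ₀, τ₀} : Set (Equiv.Perm (Fin 30))) ≤
      Equiv.Perm.fiberPermuting blockOf :=
    (Subgroup.closure_le _).2 (Set.insert_subset_iff.2 ⟨σ₀_mem, Set.singleton_subset_iff.2 τ₀_mem⟩)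
  refine ⟨σ₀, τ₀, cycleType_σ₀, ?_, cycleType_τ₀, ?_, cycleType_σ₀_mul_τ₀, ?_, ?_,
    fun i => blockOf ⁻¹' {i}, ncard_blockOf_fiber, fun i j hij => ?_, ?_, fun i g hg => ?_⟩
  · rw [Equiv.Perm.card_filter_apply_eq_self_s17, cycleType_σ₀]; rfl
  · rw [Equiv.Perm.card_filter_apply_eq_self_s17, cycleType_τ₀]; rfl
  · rw [Equiv.Perm.card_filter_apply_eq_self_s17, cycleType_σ₀_mul_τ₀]; rfl
  · refine Equiv.Perm.exists_mem_apply_eq_of_forall_base (a := 0) fun y => ?_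
    exact Equiv.Perm.exists_mem_apply_eq_of_mem_iterate_orbitStep hgens 0 11 y
      (by rw [orbit_σ₀_τ₀]; exact Finset.mem_univ y)
  · exact (Set.disjoint_singleton.2 hij).preimage blockOf
  · rw [← Set.preimage_iUnion, Set.iUnion_of_singleton, Set.preimage_univ]
  · exact Equiv.Perm.image_preimage_singleton_eq_or_disjoint (hblocks hg) i
end
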